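/- Let L : (0,∞) → (0,∞) be measurable and slowly varying at infinity. Then for every ε > 0 there exists a_ε > 0 such that for all x, y > a_ε, L(y)/L(x) ≤ 2·max((y/x)^ε, (y/x)^{-ε}). -/

import Mathlib

open Filter Set Real

/-- `L` is slowly varying at infinity. -/
def SlowlyVarying (L : ℝ → ℝ) : Prop :=
  ∀ c : ℝ, 0 < c → Tendsto (fun x => L (c * x) / L x) atTop (nhds 1)

open MeasureTheory in
open scoped ENNReal in

lemma uct (h : ℝ → ℝ) (hm : Measurable h)
    (hs : ∀ u : ℝ, Tendsto (fun s => h (s + u) - h s) atTop (nhds 0)) :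
    ∀ ε : ℝ, 0 < ε → ∃ X : ℝ, ∀ s ≥ X, ∀ u ∈ Icc (0:ℝ) 1, |h (s + u) - h s| ≤ ε := by
  intro ε hε
  by_contra hcon
  push_neg at hcon
  -- hcon : ∀ X, ∃ s ≥ X, ∃ u ∈ Icc 0 1, ε < |h (s + u) - h s|
  choose x hx u hu hbig using hcon
  set X : ℕ → ℝ := fun n => x n with hX
  have hXtop : Tendsto X atTop atTop :=
    tendsto_atTop_mono (fun n => hx (n : ℝ)) tendsto_natCast_atTop_atTop
  set U : ℕ → ℝ := fun n => u n with hU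
  have hUmem : ∀ n, U n ∈ Icc (0:ℝ) 1 := fun n => hu _
  have hYtop : Tendsto (fun n => X n + U n) atTop atTop := by
    apply tendsto_atTop_mono (fun n => ?_) hXtop
    have := (hUmem n).1; linarith
  set ε' : ℝ := ε / 3 with hε'
  have hε'pos : 0 < ε' := by positivity
  -- the two families of sets
  have key : ∀ (Y : ℕ → ℝ), Tendsto Y atTop atTop →
      ∃ N, (volume {t ∈ Icc (0:ℝ) 2 | ∀ m, N ≤ m → |h (Y m + t) - h (Y m)| < ε'} : ℝ≥0∞)
        > ENNReal.ofReal (3/2) := by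
    intro Y hY
    set E : ℕ → Set ℝ := fun n => {t ∈ Icc (0:ℝ) 2 | ∀ m, n ≤ m → |h (Y m + t) - h (Y m)| < ε'}
      with hE
    have hEmeas : ∀ n, MeasurableSet (E n) := by
      intro n
      have : E n = Icc (0:ℝ) 2 ∩ ⋂ m, ⋂ (_ : n ≤ m), {t | |h (Y m + t) - h (Y m)| < ε'} := by
        ext t; simp [hE, Set.mem_setOf_eq, Set.mem_iInter]
      rw [this]
      refine measurableSet_Icc.inter (MeasurableSet.iInter fun m => MeasurableSet.iInter fun _ => ?_)
      have hmeas : Measurable fun t => |h (Y m + t) - h (Y m)| :=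
        ((hm.comp (measurable_const_add (Y m))).sub measurable_const).abs
      exact measurableSet_lt hmeas measurable_const
    have hmono : Monotone E := by
      intro a b hab t ht
      exact ⟨ht.1, fun m hm' => ht.2 m (le_trans hab hm')⟩
    have hcover : ⋃ n, E n = Icc (0:ℝ) 2 := by
      apply Set.Subset.antisymm
      · exact Set.iUnion_subset fun n t ht => ht.1
      · intro t ht
        have := (hs t).comp hY
        have hev : ∀ᶠ m in atTop, |h (Y m + t) - h (Y m)| < ε' := by
          have : ∀ᶠ m in atTop, dist (h (Y m + t) - h (Y m)) 0 < ε' :=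
            (Metric.tendsto_nhds.mp ((hs t).comp hY)) ε' hε'pos
          simpa [Real.dist_eq] using this
        obtain ⟨N, hN⟩ := hev.exists_forall_of_atTop
        exact Set.mem_iUnion.mpr ⟨N, ht, hN⟩
    have hlim : Tendsto (fun n => volume (E n)) atTop (nhds (volume (Icc (0:ℝ) 2))) := by
      rw [← hcover]
      exact tendsto_measure_iUnion_atTop hmono
    have hval : volume (Icc (0:ℝ) 2) = ENNReal.ofReal 2 := by
      rw [Real.volume_Icc]; norm_num
    have hgt : ENNReal.ofReal (3/2) < volume (Icc (0:ℝ) 2) := by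
      rw [hval]; exact ENNReal.ofReal_lt_ofReal_iff (by norm_num) |>.mpr (by norm_num)
    have := hlim.eventually_const_lt hgt
    obtain ⟨N, hN⟩ := this.exists
    exact ⟨N, hN⟩
  obtain ⟨N₁, hN₁⟩ := key X hXtop
  obtain ⟨N₂, hN₂⟩ := key (fun n => X n + U n) hYtop
  set N := max N₁ N₂ with hN
  set A : Set ℝ := {t ∈ Icc (0:ℝ) 2 | ∀ m, N₁ ≤ m → |h (X m + t) - h (X m)| < ε'} with hA
  set F : Set ℝ := {t ∈ Icc (0:ℝ) 2 | ∀ m, N₂ ≤ m → |h (X m + U m + t) - h (X m + U m)| < ε'}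
    with hF
  set B : Set ℝ := (fun t => U N + t) '' F with hB
  have hvolB : volume B = volume F := by
    rw [hB, Set.image_add_left]
    exact measure_preimage_add volume _ F
  have hABsub : A ∪ B ⊆ Icc (0:ℝ) 3 := by
    rintro t (ht | ⟨t', ht', rfl⟩)
    · exact ⟨ht.1.1, le_trans ht.1.2 (by norm_num)⟩
    · constructor
      · show (0:ℝ) ≤ U N + t'
        have h1 := (hUmem N).1; have h2 := ht'.1.1; linarith
      · show U N + t' ≤ 3
        have h1 := (hUmem N).2; have h2 := ht'.1.2; linarith
  have hinter : (A ∩ B).Nonempty := by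
    by_contra hne
    rw [Set.not_nonempty_iff_eq_empty] at hne
    have hmeasB : MeasurableSet B := by
      rw [hB, Set.image_add_left]
      have : A ∪ B = A ∪ B := rfl
      refine MeasurableSet.preimage ?_ (measurable_const_add _)
      -- measurability of F
      have : F = Icc (0:ℝ) 2 ∩ ⋂ m, ⋂ (_ : N₂ ≤ m),
          {t | |h (X m + U m + t) - h (X m + U m)| < ε'} := by
        ext t; simp [hF, Set.mem_setOf_eq, Set.mem_iInter]
      rw [this]
      refine measurableSet_Icc.inter
        (MeasurableSet.iInter fun m => MeasurableSet.iInter fun _ => ?_)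
      have hmeas : Measurable fun t => |h (X m + U m + t) - h (X m + U m)| :=
        ((hm.comp (measurable_const_add _)).sub measurable_const).abs
      exact measurableSet_lt hmeas measurable_const
    have h1 : volume (A ∪ B) + volume (A ∩ B) = volume A + volume B :=
      measure_union_add_inter A hmeasB
    rw [hne, measure_empty, add_zero] at h1
    have h2 : volume (A ∪ B) ≤ ENNReal.ofReal 3 := by
      calc volume (A ∪ B) ≤ volume (Icc (0:ℝ) 3) := measure_mono hABsub
      _ = ENNReal.ofReal 3 := by rw [Real.volume_Icc]; norm_num
    have h3 : ENNReal.ofReal 3 < volume A + volume B := by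
      have : (ENNReal.ofReal 3 : ℝ≥0∞) = ENNReal.ofReal (3/2) + ENNReal.ofReal (3/2) := by
        rw [← ENNReal.ofReal_add (by norm_num) (by norm_num)]; norm_num
      rw [this]
      exact ENNReal.add_lt_add hN₁ (by rw [hvolB]; exact hN₂)
    rw [← h1] at h3
    exact absurd h3 (not_lt.mpr h2)
  obtain ⟨t, htA, htB⟩ := hinter
  obtain ⟨t', ht'F, rfl⟩ := htB
  have e1 : |h (X N + (U N + t')) - h (X N)| < ε' := htA.2 N (le_max_left _ _)
  have e2 : |h (X N + U N + t') - h (X N + U N)| < ε' := ht'F.2 N (le_max_right _ _)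
  have e3 : ε < |h (X N + U N) - h (X N)| := hbig (N : ℝ)
  have eassoc : X N + (U N + t') = X N + U N + t' := by ring
  rw [eassoc] at e1
  have : |h (X N + U N) - h (X N)| ≤ |h (X N + U N + t') - h (X N + U N)| + |h (X N + U N + t') - h (X N)| := by
    have := abs_sub_abs_le_abs_sub (h (X N + U N + t') - h (X N)) (h (X N + U N + t') - h (X N + U N))
    calc |h (X N + U N) - h (X N)| = |(h (X N + U N + t') - h (X N)) - (h (X N + U N + t') - h (X N + U N))| := by ring_nf
    _ ≤ |h (X N + U N + t') - h (X N + U N)| + |h (X N + U N + t') - h (X N)| := by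
        rw [abs_sub_comm]; exact abs_sub _ _
  linarith [hε'pos]

/-- Potter-type bound: if `L` is positive, measurable and slowly varying at infinity,
then for every `ε > 0` there is `a_ε > 0` such that for all `x, y > a_ε`,
`L(y)/L(x) ≤ 2 max((y/x)^ε, (y/x)^(-ε))`. -/
theorem potter_bound
    (L : ℝ → ℝ) (hLmeas : Measurable L) (hLpos : ∀ x, 0 < x → 0 < L x)
    (hSV : SlowlyVarying L) :
    ∀ ε : ℝ, 0 < ε → ∃ aε : ℝ, 0 < aε ∧ ∀ x y : ℝ, aε < x → aε < y →
      L y / L x ≤ 2 * max ((y / x) ^ ε) ((y / x) ^ (-ε)) := by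
  intro ε hε
  set h : ℝ → ℝ := fun s => Real.log (L (Real.exp s)) with hh
  have hm : Measurable h := Real.measurable_log.comp (hLmeas.comp Real.measurable_exp)
  have hs : ∀ u : ℝ, Tendsto (fun s => h (s + u) - h s) atTop (nhds 0) := by
    intro u
    have hc : (0:ℝ) < Real.exp u := Real.exp_pos u
    have h1 : Tendsto (fun s => L (Real.exp u * Real.exp s) / L (Real.exp s)) atTop (nhds 1) :=
      (hSV _ hc).comp Real.tendsto_exp_atTop
    have h2 : Tendsto (fun s => Real.log (L (Real.exp u * Real.exp s) / L (Real.exp s)))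
        atTop (nhds 0) := by
      have hcont : ContinuousAt Real.log 1 := Real.continuousAt_log one_ne_zero
      have := hcont.tendsto.comp h1
      simpa [Function.comp_def] using this
    apply h2.congr
    intro s
    rw [hh]
    simp only
    rw [← Real.exp_add u s, ← Real.log_div
      (ne_of_gt (hLpos _ (Real.exp_pos _))) (ne_of_gt (hLpos _ (Real.exp_pos _)))]
    ring_nf
  set δ : ℝ := min (Real.log 2) ε with hδ
  have hδpos : 0 < δ := lt_min (Real.log_pos one_lt_two) hε
  obtain ⟨X, hX⟩ := uct h hm hs δ hδpos
  -- step bound by induction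
  have claim : ∀ n : ℕ, ∀ s : ℝ, X ≤ s → ∀ t : ℝ, (n:ℝ) ≤ t → t < (n:ℝ) + 1 →
      |h (s + t) - h s| ≤ δ * ((n:ℝ) + 1) := by
    intro n
    induction n with
    | zero =>
      intro s hsX t ht0 ht1
      have := hX s hsX t ⟨by exact_mod_cast ht0, by push_cast at ht1; linarith⟩
      simpa using this
    | succ n ih =>
      intro s hsX t ht0 ht1
      have hs1 : X ≤ s + 1 := by linarith
      have h1 : |h ((s+1) + (t-1)) - h (s+1)| ≤ δ * ((n:ℝ) + 1) := by
        apply ih (s+1) hs1 (t-1)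
        · push_cast at ht0 ⊢; linarith
        · push_cast at ht1 ⊢; linarith
      have h2 : |h (s + 1) - h s| ≤ δ := by
        have := hX s hsX 1 ⟨zero_le_one, le_refl 1⟩
        simpa using this
      have heq : (s+1) + (t-1) = s + t := by ring
      rw [heq] at h1
      push_cast
      calc |h (s + t) - h s| ≤ |h (s + t) - h (s+1)| + |h (s+1) - h s| := abs_sub_le _ _ _
        _ ≤ δ * ((n:ℝ) + 1) + δ := add_le_add h1 h2
        _ = δ * ((n:ℝ) + 1 + 1) := by ring
  have bound : ∀ s : ℝ, X ≤ s → ∀ t : ℝ, 0 ≤ t → |h (s + t) - h s| ≤ δ + δ * t := by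
    intro s hsX t ht
    set n : ℕ := ⌊t⌋₊ with hn
    have h1 : (n:ℝ) ≤ t := Nat.floor_le ht
    have h2 : t < (n:ℝ) + 1 := Nat.lt_floor_add_one t
    have := claim n s hsX t h1 h2
    calc |h (s + t) - h s| ≤ δ * ((n:ℝ) + 1) := this
      _ = δ + δ * (n:ℝ) := by ring
      _ ≤ δ + δ * t := by nlinarith [hδpos.le]
  refine ⟨Real.exp X, Real.exp_pos X, fun x y hx hy => ?_⟩
  have hx0 : (0:ℝ) < x := lt_trans (Real.exp_pos X) hx
  have hy0 : (0:ℝ) < y := lt_trans (Real.exp_pos X) hy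
  have hlx : X ≤ Real.log x := by
    rw [← Real.log_exp X]; exact (Real.log_le_log_iff (Real.exp_pos X) hx0).mpr hx.le
  have hly : X ≤ Real.log y := by
    rw [← Real.log_exp X]; exact (Real.log_le_log_iff (Real.exp_pos X) hy0).mpr hy.le
  set r : ℝ := Real.log y - Real.log x with hr
  have hhx : h (Real.log x) = Real.log (L x) := by rw [hh]; simp [Real.exp_log hx0]
  have hhy : h (Real.log y) = Real.log (L y) := by rw [hh]; simp [Real.exp_log hy0]
  have hb : |Real.log (L y) - Real.log (L x)| ≤ δ + δ * |r| := by
    rcases le_total (Real.log x) (Real.log y) with hc | hc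
    · have h0 : (0:ℝ) ≤ r := by rw [hr]; linarith
      have := bound (Real.log x) hlx r h0
      rw [show Real.log x + r = Real.log y by rw [hr]; ring, hhx, hhy] at this
      rw [abs_of_nonneg h0]
      exact this
    · have h0 : (0:ℝ) ≤ -r := by rw [hr]; linarith
      have := bound (Real.log y) hly (-r) h0
      rw [show Real.log y + -r = Real.log x by rw [hr]; ring, hhx, hhy] at this
      rw [abs_sub_comm, ← abs_neg r, abs_of_nonneg h0]
      exact this
  have hyx0 : (0:ℝ) < y / x := div_pos hy0 hx0
  have hmax : max ((y / x) ^ ε) ((y / x) ^ (-ε)) = Real.exp (ε * |r|) := by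
    rw [Real.rpow_def_of_pos hyx0, Real.rpow_def_of_pos hyx0]
    rw [← Real.exp_strictMono.monotone.map_max]
    congr 1
    rw [Real.log_div (ne_of_gt hy0) (ne_of_gt hx0)]
    rw [show Real.log y - Real.log x = r from rfl]
    rcases le_total 0 r with h0 | h0
    · rw [abs_of_nonneg h0, max_eq_left (by nlinarith)]; ring
    · rw [abs_of_nonpos h0, max_eq_right (by nlinarith)]; ring
  have hLL : L y / L x = Real.exp (Real.log (L y) - Real.log (L x)) := by
    rw [Real.exp_sub, Real.exp_log (hLpos y hy0), Real.exp_log (hLpos x hx0)]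
  rw [hLL, hmax, show (2:ℝ) * Real.exp (ε * |r|) = Real.exp (Real.log 2 + ε * |r|) by
    rw [Real.exp_add, Real.exp_log two_pos]]
  rw [Real.exp_le_exp]
  have h1 : Real.log (L y) - Real.log (L x) ≤ δ + δ * |r| :=
    le_trans (le_abs_self _) hb
  have h2 : δ ≤ Real.log 2 := min_le_left _ _
  have h3 : δ ≤ ε := min_le_right _ _
  nlinarith [abs_nonneg r]
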